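/- Let A be a K-algebra that is a domain with degree function v, C a K-subalgebra of A, δ : C → C a K-linear map with drop Δ = Δ_{δ,v}, and C' := C∖K, and suppose conditions (1)–(5) hold: (1) Δ(ab) ≤ max{Δ(a), Δ(b)} for all a,b ∈ C; (2) Δ(aⁿ) = Δ(a) for all a ∈ C and n ≥ 1; (3) v(c) ≥ 0 for all nonzero c ∈ C and v(C'∖{0}) ≠ {0}; (4) dim_K(C_{≤i}/C_{≤i−1}) ≤ 1 for all i ≥ 0, where C_{≤i} := {c ∈ C : v(c) ≤ i}; (5) ker(δ) = K. Let g be the unique positive integer with ℤ·v(C'∖{0}) = ℤg. If Δ(a) < 0 for some a ∈ C, then the constant drop Δ equals −g, the map δ is locally nilpotent, and there exists a K-basis {e_i}_{i∈ℕ} of C such that δ(e_i) = e_{i−1} for all i ≥ 0 (with e_{−1} := 0) and C_{≤ig} = ⊕_{j=0}^{i} K·e_j for all i ≥ 0. -/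

import Mathlib

/-!
Since the drop is constant and negative, `δ` lowers the degree by `-D` on `C ∖ K`. Applied to a
nonconstant element of minimal degree it lands in `K*`, so that degree is `-D`, and induction on
the degree shows that every degree on `C ∖ K` is a multiple of `-D`; hence `-D = g`. Multiplying by
an element of degree `g` and cancelling leading terms with (4) shows that `δ` is surjective, so `1`
lifts to a sequence `e_i` with `δ e_{i+1} = e_i` and `v(e_i) = i g`, and (4) again shows that
`e_0, …, e_i` span `C_{≤ i g}`.
-/

open Set Submodule

structure IsDegreeFunction (K : Type*) {C : Type*} [Field K] [Ring C] [Algebra K C]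
    (w : C → WithBot ℤ) : Prop where
  map_zero : w 0 = ⊥
  map_mul : ∀ a b, a ≠ 0 → b ≠ 0 → w (a * b) = w a + w b
  map_add_le : ∀ a b, w (a + b) ≤ max (w a) (w b)
  map_algebraMap : ∀ k : K, k ≠ 0 → w (algebraMap K C k) = 0

/-- Condition (4), `dim_K (C_{≤ i} / C_{≤ i - 1}) ≤ 1` for `i ≥ 0`, stated without quotients. -/
def GradedDimLeOne (K : Type*) {C : Type*} [Field K] [AddCommGroup C] [Module K C]
    (w : C → WithBot ℤ) : Prop :=
  ∀ (i : ℕ) (a b : C), w a ≤ ((i : ℤ) : WithBot ℤ) → w b ≤ ((i : ℤ) : WithBot ℤ) →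
    ∃ k l : K, (k ≠ 0 ∨ l ≠ 0) ∧ w (k • a + l • b) < ((i : ℤ) : WithBot ℤ)

theorem Function.Surjective.exists_seq_apply_succ {α : Type*} {f : α → α}
    (hf : Function.Surjective f) (a : α) : ∃ e : ℕ → α, e 0 = a ∧ ∀ i, f (e (i + 1)) = e i :=
  ⟨fun i => (Function.surjInv hf)^[i] a, rfl, fun i => by
    simp only [Function.iterate_succ_apply', Function.surjInv_eq hf]⟩

theorem linearIndependent_of_notMem_span_image_Iio {K V : Type*} [DivisionRing K]
    [AddCommGroup V] [Module K V] {e : ℕ → V} (he : ∀ n, e n ∉ span K (e '' Iio n)) :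
    LinearIndependent K e := by
  have hIio : ∀ n, LinearIndepOn K e (Iio n) := by
    intro n
    induction n with
    | zero => simp
    | succ n ih =>
      rw [show Iio (n + 1) = insert n (Iio n) by ext; simp]
      exact ih.insert (he n)
  rw [← linearIndepOn_univ_iff, ← iUnion_Iio]
  exact linearIndepOn_iUnion_of_directed monotone_Iio.directed_le hIio

theorem WithBot.exists_nat_eq_of_nonneg {x : WithBot ℤ} (hx : 0 ≤ x) :
    ∃ n : ℕ, x = ((n : ℤ) : WithBot ℤ) := by
  obtain ⟨m, rfl⟩ := WithBot.ne_bot_iff_exists.1 (ne_bot_of_le_ne_bot (by simp) hx)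
  lift m to ℕ using (by exact_mod_cast hx)
  exact ⟨m, rfl⟩

theorem ne_zero_of_notMem_range_algebraMap {K C : Type*} [CommSemiring K] [Semiring C]
    [Algebra K C] {c : C} (hc : c ∉ range (algebraMap K C)) : c ≠ 0 := by
  rintro rfl
  exact hc ⟨0, map_zero _⟩

namespace IsDegreeFunction

variable {K C : Type*} [Field K] [Ring C] [Algebra K C] {w : C → WithBot ℤ}

theorem restrict {A : Type*} [Ring A] [Algebra K A] {v : A → WithBot ℤ}
    (hv : IsDegreeFunction K v) (C : Subalgebra K A) : IsDegreeFunction K (fun c : C => v c) where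
  map_zero := hv.map_zero
  map_mul a b ha hb := hv.map_mul a b (by simpa using ha) (by simpa using hb)
  map_add_le a b := hv.map_add_le a b
  map_algebraMap k hk := hv.map_algebraMap k hk

theorem map_one (hw : IsDegreeFunction K w) : w 1 = 0 := by
  simpa using hw.map_algebraMap 1 one_ne_zero

theorem map_smul (hw : IsDegreeFunction K w) {k : K} (hk : k ≠ 0) (x : C) : w (k • x) = w x := by
  rcases eq_or_ne x 0 with rfl | hx
  · rw [smul_zero]
  have hk' : algebraMap K C k ≠ 0 := fun h0 => by
    simpa [h0, hw.map_zero] using hw.map_algebraMap k hk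
  rw [Algebra.smul_def, hw.map_mul _ _ hk' hx, hw.map_algebraMap k hk, zero_add]

theorem le_of_mem_span (hw : IsDegreeFunction K w) {s : Set C} {B : WithBot ℤ}
    (hs : ∀ x ∈ s, w x ≤ B) {x : C} (hx : x ∈ span K s) : w x ≤ B := by
  induction hx using Submodule.span_induction with
  | mem x hx => exact hs x hx
  | zero => simp [hw.map_zero]
  | add x y _ _ hx hy => exact (hw.map_add_le x y).trans (max_le hx hy)
  | smul k x _ hx =>
    rcases eq_or_ne k 0 with rfl | hk
    · simp [hw.map_zero]
    · rwa [hw.map_smul hk]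

theorem wellFounded_lt (hw : IsDegreeFunction K w) (hnonneg : ∀ c, c ≠ 0 → 0 ≤ w c) :
    WellFounded (fun a b : C => w a < w b) := by
  refine Subrelation.wf (r := InvImage (· < ·) fun c => (w c).map Int.toNat) ?_
    (InvImage.wf _ _root_.wellFounded_lt)
  intro a b hab
  have hb : b ≠ 0 := by rintro rfl; simp [hw.map_zero] at hab
  obtain ⟨n, hn⟩ := WithBot.exists_nat_eq_of_nonneg (hnonneg b hb)
  rcases eq_or_ne a 0 with rfl | ha
  · simp [InvImage, hw.map_zero, hn]
  obtain ⟨m, hm⟩ := WithBot.exists_nat_eq_of_nonneg (hnonneg a ha)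
  rw [hm, hn] at hab
  simpa [InvImage, hm, hn] using hab

theorem map_le_zero_of_mem_range (hw : IsDegreeFunction K w) {c : C}
    (hc : c ∈ range (algebraMap K C)) : w c ≤ 0 := by
  obtain ⟨k, rfl⟩ := hc
  rcases eq_or_ne k 0 with rfl | hk
  · simp [hw.map_zero]
  · exact (hw.map_algebraMap k hk).le

theorem map_eq_zero_of_mem_range (hw : IsDegreeFunction K w) (hnonneg : ∀ c, c ≠ 0 → 0 ≤ w c)
    {c : C} (hc : c ∈ range (algebraMap K C)) (hc0 : c ≠ 0) : w c = 0 :=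
  (hw.map_le_zero_of_mem_range hc).antisymm (hnonneg c hc0)

theorem exists_add_smul_lt (hw : IsDegreeFunction K w) (hdim : GradedDimLeOne K w) {n : ℤ}
    (hn : 0 ≤ n) {a b : C} (ha : w a ≤ n) (hb : w b = n) : ∃ l : K, w (a + l • b) < n := by
  lift n to ℕ using hn
  obtain ⟨k, l, hkl, hlt⟩ := hdim n a b ha hb.le
  have hk : k ≠ 0 := by
    rintro rfl
    rw [zero_smul, zero_add, hw.map_smul (hkl.resolve_left (not_not.2 rfl)), hb] at hlt
    exact lt_irrefl _ hlt
  have hcomb : a + (k⁻¹ * l) • b = k⁻¹ • (k • a + l • b) := by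
    rw [smul_add, smul_smul, smul_smul, inv_mul_cancel₀ hk, one_smul]
  exact ⟨k⁻¹ * l, by rwa [hcomb, hw.map_smul (inv_ne_zero hk)]⟩

section Basis

variable {g : ℤ} {e : ℕ → C}

theorem linearIndependent_of_map_eq_mul (hw : IsDegreeFunction K w) (hg : 0 < g)
    (he : ∀ i, w (e i) = (((i : ℤ) * g : ℤ) : WithBot ℤ)) : LinearIndependent K e := by
  refine linearIndependent_of_notMem_span_image_Iio fun n hn => ?_
  have hle := hw.le_of_mem_span (B := (((n : ℤ) * g - g : ℤ) : WithBot ℤ)) ?_ hn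
  · rw [he] at hle
    have : (n : ℤ) * g ≤ n * g - g := by exact_mod_cast hle
    omega
  · rintro _ ⟨j, hj, rfl⟩
    rw [he]
    have : (j : ℤ) + 1 ≤ n := by exact_mod_cast hj
    exact_mod_cast (by nlinarith : (j : ℤ) * g ≤ n * g - g)

theorem setOf_le_eq_span (hw : IsDegreeFunction K w) (hdim : GradedDimLeOne K w) (hg : 0 < g)
    (hval : ∀ c, c ≠ 0 → ∃ n : ℕ, w c = (((n : ℤ) * g : ℤ) : WithBot ℤ))
    (he : ∀ i, w (e i) = (((i : ℤ) * g : ℤ) : WithBot ℤ)) (i : ℕ) :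
    {c | w c ≤ (((i : ℤ) * g : ℤ) : WithBot ℤ)} = (span K (e '' Iic i) : Set C) := by
  refine Subset.antisymm ?_ fun c hc => hw.le_of_mem_span ?_ hc
  have step : ∀ i : ℕ, (∀ x, w x < (((i : ℤ) * g : ℤ) : WithBot ℤ) → x ∈ span K (e '' Iic i)) →
      ∀ c, w c ≤ (((i : ℤ) * g : ℤ) : WithBot ℤ) → c ∈ span K (e '' Iic i) := by
    intro i hlt c hc
    obtain ⟨l, hl⟩ := hw.exists_add_smul_lt hdim (by positivity) hc (he i)
    rw [← add_sub_cancel_right c (l • e i)]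
    exact sub_mem (hlt _ hl) (smul_mem _ _ (subset_span ⟨i, mem_Iic.2 le_rfl, rfl⟩))
  induction i with
  | zero =>
    refine step 0 fun x hx => ?_
    rcases eq_or_ne x 0 with rfl | hx0
    · exact zero_mem _
    obtain ⟨n, hn⟩ := hval x hx0
    rw [hn] at hx
    have : (n : ℤ) * g < 0 * g := by exact_mod_cast hx
    nlinarith
  | succ i ih =>
    refine step (i + 1) fun x hx => span_mono (image_mono (Iic_subset_Iic.2 i.le_succ)) (ih ?_)
    show w x ≤ _
    rcases eq_or_ne x 0 with rfl | hx0
    · simp [hw.map_zero]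
    obtain ⟨n, hn⟩ := hval x hx0
    rw [hn] at hx ⊢
    have : (n : ℤ) * g < (i + 1) * g := by exact_mod_cast hx
    have : (n : ℤ) ≤ i := by nlinarith
    exact_mod_cast (by nlinarith : (n : ℤ) * g ≤ i * g)
  · rintro _ ⟨j, hj, rfl⟩
    rw [he]
    have : (j : ℤ) ≤ i := by exact_mod_cast hj
    exact_mod_cast (by nlinarith : (j : ℤ) * g ≤ i * g)

theorem top_le_span_range (hw : IsDegreeFunction K w) (hdim : GradedDimLeOne K w) (hg : 0 < g)
    (hval : ∀ c, c ≠ 0 → ∃ n : ℕ, w c = (((n : ℤ) * g : ℤ) : WithBot ℤ))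
    (he : ∀ i, w (e i) = (((i : ℤ) * g : ℤ) : WithBot ℤ)) : ⊤ ≤ span K (range e) := by
  rintro c -
  rcases eq_or_ne c 0 with rfl | hc
  · exact zero_mem _
  obtain ⟨n, hn⟩ := hval c hc
  exact span_mono (image_subset_range e _)
    ((hw.setOf_le_eq_span hdim hg hval he n).subset hn.le)

end Basis

end IsDegreeFunction

/-- Conditions (3) (first half), (4) and (5), with constant drop `D` on `C ∖ K`. -/
structure IsConstantDrop (K : Type*) {C : Type*} [Field K] [Ring C] [Algebra K C]
    (w : C → WithBot ℤ) (δ : C →ₗ[K] C) (D : ℤ) : Prop where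
  degree : IsDegreeFunction K w
  nonneg : ∀ c, c ≠ 0 → 0 ≤ w c
  gradedDimLeOne : GradedDimLeOne K w
  ker_eq : ∀ c, δ c = 0 ↔ c ∈ range (algebraMap K C)
  drop_eq : ∀ a, a ∉ range (algebraMap K C) → w (δ a) = w a + D

namespace IsConstantDrop

variable {K C : Type*} [Field K] [Ring C] [Algebra K C] {w : C → WithBot ℤ} {δ : C →ₗ[K] C}
  {D g : ℤ}

theorem drop_eq_coe (h : IsConstantDrop K w δ D) {a : C} (ha : a ∉ range (algebraMap K C))
    {n : ℤ} (hn : w a = n) : w (δ a) = ((n + D : ℤ) : WithBot ℤ) := by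
  rw [h.drop_eq a ha, hn]
  rfl

theorem exists_nat_eq (h : IsConstantDrop K w δ D) {c : C} (hc : c ≠ 0) :
    ∃ n : ℕ, w c = ((n : ℤ) : WithBot ℤ) :=
  WithBot.exists_nat_eq_of_nonneg (h.nonneg c hc)

theorem neg_of_exists_lt (h : IsConstantDrop K w δ D) (hneg : ∃ a, δ a ≠ 0 ∧ w (δ a) < w a) :
    D < 0 := by
  obtain ⟨a, ha, hlt⟩ := hneg
  have haK : a ∉ range (algebraMap K C) := mt (h.ker_eq a).2 ha
  obtain ⟨n, hn⟩ := h.exists_nat_eq (ne_zero_of_notMem_range_algebraMap haK)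
  rw [h.drop_eq_coe haK hn, hn] at hlt
  have : (n : ℤ) + D < n := by exact_mod_cast hlt
  omega

theorem drop_lt (h : IsConstantDrop K w δ D) (hD : D < 0) {a : C}
    (ha : a ∉ range (algebraMap K C)) : w (δ a) < w a := by
  obtain ⟨n, hn⟩ := h.exists_nat_eq (ne_zero_of_notMem_range_algebraMap ha)
  rw [h.drop_eq_coe ha hn, hn]
  exact_mod_cast (by omega : (n : ℤ) + D < n)

theorem exists_degree_eq_neg (h : IsConstantDrop K w δ D) (hD : D < 0) {a : C}
    (ha : a ∉ range (algebraMap K C)) :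
    ∃ b, b ∉ range (algebraMap K C) ∧ w b = ((-D : ℤ) : WithBot ℤ) := by
  obtain ⟨b, hb, hmin⟩ := (h.degree.wellFounded_lt h.nonneg).has_min
    {c | c ∉ range (algebraMap K C)} ⟨a, ha⟩
  have hδb : δ b ∈ range (algebraMap K C) := by
    by_contra hδb
    exact hmin _ hδb (h.drop_lt hD hb)
  obtain ⟨n, hn⟩ := h.exists_nat_eq (ne_zero_of_notMem_range_algebraMap hb)
  have h0 := h.degree.map_eq_zero_of_mem_range h.nonneg hδb (mt (h.ker_eq b).1 hb)
  rw [h.drop_eq_coe hb hn] at h0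
  have : (n : ℤ) + D = 0 := by exact_mod_cast h0
  exact ⟨b, hb, by rw [hn]; congr 1; omega⟩

theorem dvd_of_notMem_range (h : IsConstantDrop K w δ D) (hD : D < 0) {c : C}
    (hc : c ∉ range (algebraMap K C)) {n : ℤ} (hn : w c = n) : -D ∣ n := by
  induction c using (h.degree.wellFounded_lt h.nonneg).induction generalizing n with
  | _ c ih =>
  by_cases hδc : δ c ∈ range (algebraMap K C)
  · have h0 := h.degree.map_eq_zero_of_mem_range h.nonneg hδc (mt (h.ker_eq c).1 hc)
    rw [h.drop_eq_coe hc hn] at h0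
    have : n + D = 0 := by exact_mod_cast h0
    exact ⟨1, by omega⟩
  · obtain ⟨t, ht⟩ := ih _ (h.drop_lt hD hc) hδc (h.drop_eq_coe hc hn)
    exact ⟨t + 1, by linarith⟩

theorem eq_neg_of_closure_eq (h : IsConstantDrop K w δ D) (hD : D < 0) {a : C}
    (ha : a ∉ range (algebraMap K C)) (hg : 0 < g)
    (hgZ : AddSubgroup.closure {n : ℤ | ∃ c, c ∉ range (algebraMap K C) ∧ w c = n}
      = AddSubgroup.zmultiples g) : D = -g := by
  obtain ⟨b, hb, hbw⟩ := h.exists_degree_eq_neg hD ha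
  have hg_dvd : g ∣ -D :=
    Int.mem_zmultiples_iff.1 (hgZ ▸ AddSubgroup.subset_closure ⟨b, hb, hbw⟩)
  have hclosure : AddSubgroup.closure {n : ℤ | ∃ c, c ∉ range (algebraMap K C) ∧ w c = n}
      ≤ AddSubgroup.zmultiples (-D) :=
    (AddSubgroup.closure_le _).2 fun n ⟨c, hc, hcn⟩ =>
      Int.mem_zmultiples_iff.2 (h.dvd_of_notMem_range hD hc hcn)
  have hD_dvd : -D ∣ g := Int.mem_zmultiples_iff.1 (hclosure (hgZ ▸ AddSubgroup.mem_zmultiples g))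
  have := Int.dvd_antisymm (by omega) hg.le hD_dvd hg_dvd
  omega

theorem exists_nat_mul_eq (h : IsConstantDrop K w δ (-g)) (hg : 0 < g) (c : C) (hc : c ≠ 0) :
    ∃ n : ℕ, w c = (((n : ℤ) * g : ℤ) : WithBot ℤ) := by
  by_cases hcK : c ∈ range (algebraMap K C)
  · exact ⟨0, by simpa using h.degree.map_eq_zero_of_mem_range h.nonneg hcK hc⟩
  obtain ⟨n, hn⟩ := h.exists_nat_eq hc
  obtain ⟨t, ht⟩ := h.dvd_of_notMem_range (neg_lt_zero.2 hg) hcK hn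
  rw [neg_neg] at ht
  have ht0 : 0 ≤ t := by nlinarith
  lift t to ℕ using ht0
  exact ⟨t, by rw [hn, ht, mul_comm]⟩

theorem surjective (h : IsConstantDrop K w δ (-g)) (hg : 0 < g) {b : C}
    (hb : w b = (g : WithBot ℤ)) : Function.Surjective δ := by
  intro x
  induction x using (h.degree.wellFounded_lt h.nonneg).induction with
  | _ x ih =>
  rcases eq_or_ne x 0 with rfl | hx
  · exact ⟨0, map_zero δ⟩
  obtain ⟨m, hm⟩ := h.exists_nat_eq hx
  have hb0 : b ≠ 0 := by
    rintro rfl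
    simp [h.degree.map_zero] at hb
  have hz : w (x * b) = ((m + g : ℤ) : WithBot ℤ) := by
    rw [h.degree.map_mul _ _ hx hb0, hm, hb]
    rfl
  have hzK : x * b ∉ range (algebraMap K C) := fun hK => by
    have := h.degree.map_le_zero_of_mem_range hK
    rw [hz] at this
    have : (m : ℤ) + g ≤ 0 := by exact_mod_cast this
    omega
  have hδz : w (δ (x * b)) = ((m : ℤ) : WithBot ℤ) := by
    rw [h.drop_eq_coe hzK hz, add_neg_cancel_right]
  obtain ⟨l, hl⟩ := h.degree.exists_add_smul_lt h.gradedDimLeOne (Nat.cast_nonneg m) hm.le hδz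
  obtain ⟨y, hy⟩ := ih _ (hl.trans_eq hm.symm)
  exact ⟨y - l • (x * b), by rw [map_sub, map_smul, hy, add_sub_cancel_right]⟩

theorem degree_seq (h : IsConstantDrop K w δ (-g)) {e : ℕ → C} (he0 : e 0 = 1)
    (he : ∀ i, δ (e (i + 1)) = e i) (i : ℕ) : w (e i) = (((i : ℤ) * g : ℤ) : WithBot ℤ) := by
  induction i with
  | zero => simp [he0, h.degree.map_one]
  | succ i ih =>
    have hne : e i ≠ 0 := by
      intro h0
      rw [h0, h.degree.map_zero] at ih
      exact WithBot.bot_ne_coe ih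
    have hK : e (i + 1) ∉ range (algebraMap K C) := fun hK => hne (he i ▸ (h.ker_eq _).2 hK)
    obtain ⟨n, hn⟩ := h.exists_nat_eq (ne_zero_of_notMem_range_algebraMap hK)
    have hdrop := h.drop_eq_coe hK hn
    rw [he i, ih] at hdrop
    have : (i : ℤ) * g = n + -g := by exact_mod_cast hdrop
    rw [hn]
    congr 1
    push_cast
    linarith

theorem exists_pow_apply_eq_zero (h : IsConstantDrop K w δ D) (hD : D < 0) (c : C) :
    ∃ n : ℕ, 1 ≤ n ∧ (δ ^ n) c = 0 := by
  induction c using (h.degree.wellFounded_lt h.nonneg).induction with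
  | _ c ih =>
  by_cases hc : c ∈ range (algebraMap K C)
  · exact ⟨1, le_rfl, by simpa using (h.ker_eq c).2 hc⟩
  obtain ⟨n, -, hn⟩ := ih _ (h.drop_lt hD hc)
  exact ⟨n + 1, by omega, by rw [pow_succ, Module.End.mul_apply, hn]⟩

end IsConstantDrop

theorem negative_drop_locally_nilpotent_general
    (K A : Type*) [Field K] [Ring A] [Algebra K A]
    (v : A → WithBot ℤ)
    (hv0 : v 0 = ⊥)
    (hvmul : ∀ a b : A, a ≠ 0 → b ≠ 0 → v (a * b) = v a + v b)
    (hvadd : ∀ a b : A, v (a + b) ≤ max (v a) (v b))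
    (hvsc : ∀ k : K, k ≠ 0 → v (algebraMap K A k) = 0)
    (C : Subalgebra K A)
    (δ : C →ₗ[K] C)
    (h3a : ∀ c : C, c ≠ 0 → 0 ≤ v (c : A))
    (h4 : ∀ (i : ℕ) (a b : C), v (a : A) ≤ ((i : ℤ) : WithBot ℤ) →
      v (b : A) ≤ ((i : ℤ) : WithBot ℤ) →
      ∃ k l : K, (k ≠ 0 ∨ l ≠ 0) ∧ v ((k • a + l • b : C) : A) < ((i : ℤ) : WithBot ℤ))
    (h5 : ∀ c : C, δ c = 0 ↔ c ∈ Set.range (algebraMap K C))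
    (g : ℤ) (hg : 0 < g)
    (hgZ : AddSubgroup.closure
        {n : ℤ | ∃ c : C, c ∉ Set.range (algebraMap K C) ∧ v (c : A) = (n : WithBot ℤ)}
      = AddSubgroup.zmultiples g)
    (D : ℤ)
    (hD : ∀ a : C, a ∉ Set.range (algebraMap K C) →
      v (δ a : A) = v (a : A) + (D : WithBot ℤ))
    (hneg : ∃ a : C, δ a ≠ 0 ∧ v (δ a : A) < v (a : A)) :
    D = -g
    ∧ (∀ c : C, ∃ n : ℕ, 1 ≤ n ∧ (δ ^ n) c = 0)
    ∧ ∃ e : Module.Basis ℕ K C, δ (e 0) = 0 ∧ (∀ i : ℕ, δ (e (i + 1)) = e i)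
        ∧ ∀ i : ℕ, {c : C | v (c : A) ≤ (((i : ℤ) * g : ℤ) : WithBot ℤ)}
            = (Submodule.span K ((e : ℕ → C) '' Set.Iic i) : Set C) := by
  have h : IsConstantDrop K (fun c : C => v c) δ D :=
    ⟨(IsDegreeFunction.mk hv0 hvmul hvadd hvsc).restrict C, h3a, h4, h5, hD⟩
  have hD0 : D < 0 := h.neg_of_exists_lt hneg
  obtain ⟨a, ha, -⟩ := hneg
  have haK : a ∉ Set.range (algebraMap K C) := mt (h5 a).2 ha
  obtain rfl : D = -g := h.eq_neg_of_closure_eq hD0 haK hg hgZ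
  obtain ⟨b, -, hb⟩ := h.exists_degree_eq_neg hD0 haK
  rw [neg_neg] at hb
  obtain ⟨e, he0, he⟩ := (h.surjective hg hb).exists_seq_apply_succ 1
  have hdeg := h.degree_seq he0 he
  have hval := h.exists_nat_mul_eq hg
  have hdim := h.gradedDimLeOne
  let basis := Module.Basis.mk (h.degree.linearIndependent_of_map_eq_mul hg hdeg)
    (h.degree.top_le_span_range hdim hg hval hdeg)
  have hbasis : ⇑basis = e := Module.Basis.coe_mk _ _
  refine ⟨rfl, h.exists_pow_apply_eq_zero hD0, basis, ?_, ?_, ?_⟩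
  · rw [hbasis, he0, h5]
    exact ⟨1, map_one _⟩
  · simpa only [hbasis] using he
  · simpa only [hbasis] using h.degree.setOf_le_eq_span hdim hg hval hdeg

/-- **Theorem 2.2.(3) (negative drop forces local nilpotency).** Let `A` be a `K`-algebra
that is a domain with a degree function `v`, `C` a `K`-subalgebra of `A`, and
`δ : C → C` a `K`-linear map satisfying conditions (1)–(5) of the constant-drop theorem
(hypotheses `h1`–`h5`, with drops stated in additive form). Let `D` be the common value
of the drop `Δ_{δ,v}` on `C' = C ∖ K` (hypothesis `hD`) and let `g` be the unique
positive integer with `ℤ·v(C') = ℤg` (hypotheses `hg`, `hgZ`). If `Δ(a) < 0` for some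
`a ∈ C` (i.e. `v(δ(a)) < v(a)` for some `a` with `δ(a) ≠ 0`), then `Δ = D = −g`, the map
`δ` is locally nilpotent, and there is a `K`-basis `{e_i}_{i∈ℕ}` of `C` such that
`δ(e_i) = e_{i−1}` for all `i ≥ 0` (with `e_{−1} := 0`) and
`C_{≤ig} = ⊕_{j=0}^{i} K e_j` for all `i ≥ 0`. -/
theorem negative_drop_locally_nilpotent
    (K A : Type*) [Field K] [Ring A] [IsDomain A] [Algebra K A]
    (v : A → WithBot ℤ)
    (hv0 : v 0 = ⊥)
    (hvmul : ∀ a b : A, a ≠ 0 → b ≠ 0 → v (a * b) = v a + v b)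
    (hvadd : ∀ a b : A, v (a + b) ≤ max (v a) (v b))
    (hvsc : ∀ k : K, k ≠ 0 → v (algebraMap K A k) = 0)
    (C : Subalgebra K A)
    (δ : C →ₗ[K] C)
    (h1 : ∀ a b : C,
      v (δ (a * b) : A) ≤ max (v (δ a : A) + v (b : A)) (v (δ b : A) + v (a : A)))
    (h2 : ∀ (a : C) (n : ℕ), 1 ≤ n →
      v (δ (a ^ n) : A) + v (a : A) = v (δ a : A) + v ((a : C) ^ n : A))
    (h3a : ∀ c : C, c ≠ 0 → 0 ≤ v (c : A))
    (h3b : {m : WithBot ℤ | ∃ c : C, c ∉ Set.range (algebraMap K C) ∧ v (c : A) = m}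
      ≠ {0})
    (h4 : ∀ (i : ℕ) (a b : C), v (a : A) ≤ ((i : ℤ) : WithBot ℤ) →
      v (b : A) ≤ ((i : ℤ) : WithBot ℤ) →
      ∃ k l : K, (k ≠ 0 ∨ l ≠ 0) ∧ v ((k • a + l • b : C) : A) < ((i : ℤ) : WithBot ℤ))
    (h5 : ∀ c : C, δ c = 0 ↔ c ∈ Set.range (algebraMap K C))
    (g : ℤ) (hg : 0 < g)
    (hgZ : AddSubgroup.closure
        {n : ℤ | ∃ c : C, c ∉ Set.range (algebraMap K C) ∧ v (c : A) = (n : WithBot ℤ)}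
      = AddSubgroup.zmultiples g)
    (D : ℤ)
    (hD : ∀ a : C, a ∉ Set.range (algebraMap K C) →
      v (δ a : A) = v (a : A) + (D : WithBot ℤ))
    (hneg : ∃ a : C, δ a ≠ 0 ∧ v (δ a : A) < v (a : A)) :
    D = -g
    ∧ (∀ c : C, ∃ n : ℕ, 1 ≤ n ∧ (δ ^ n) c = 0)
    ∧ ∃ e : Module.Basis ℕ K C, δ (e 0) = 0 ∧ (∀ i : ℕ, δ (e (i + 1)) = e i)
        ∧ ∀ i : ℕ, {c : C | v (c : A) ≤ (((i : ℤ) * g : ℤ) : WithBot ℤ)}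
            = (Submodule.span K ((e : ℕ → C) '' Set.Iic i) : Set C) :=
  negative_drop_locally_nilpotent_general K A v hv0 hvmul hvadd hvsc C δ h3a h4 h5 g hg hgZ D hD
    hneg
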